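/- For any integers 0 ≤ k2 < k1 ≤ n and any prime power q, if t = k1 − k2, then there exist nested linear codes C2 ⊆ C1 ⊆ F_q^n with dim C1 = k1, dim C2 = k2, and M_t(C1, C2) = n + t − k1. -/

import Mathlib

/-- `V_I = {x ∈ F^n : i ∉ I → x i = 0}` -/
noncomputable def VI (F : Type) [Field F] (n : ℕ) (I : Finset (Fin n)) :
    Submodule F (Fin n → F) :=
  Submodule.pi (↑I)ᶜ (fun _ => (⊥ : Submodule F F))

/-- the `t`-th relative generalized Hamming weight of `C₂ ⊆ C₁ ⊆ F^n` -/
noncomputable def RGHW (F : Type) [Field F] {n : ℕ} (t : ℕ)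
    (C₁ C₂ : Submodule F (Fin n → F)) : ℕ :=
  sInf {d : ℕ | ∃ I : Finset (Fin n), I.card = d ∧
    Module.finrank F ↥(C₁ ⊓ VI F n I) ≥ Module.finrank F ↥(C₂ ⊓ VI F n I) + t}

/-- `π(q) = ∏_{i=1}^∞ (1 - q^{-i})` -/
noncomputable def piq (q : ℝ) : ℝ := ∏' i : ℕ, (1 - (q ^ (i + 1))⁻¹)

/-- `N₁(w,u) = ∏_{i=0}^{u-1}(q^w - q^i) / ∏_{i=0}^{u-1}(q^u - q^i)` -/
noncomputable def N1 (q : ℝ) (w u : ℕ) : ℝ :=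
  (∏ i ∈ Finset.range u, (q ^ w - q ^ i)) / (∏ i ∈ Finset.range u, (q ^ u - q ^ i))

/-- `N₂(w,u,v) = ∏_{i=0}^{v-1}(q^w - q^{u+i}) / ∏_{i=0}^{v-1}(q^v - q^i)` -/
noncomputable def N2 (q : ℝ) (w u v : ℕ) : ℝ :=
  (∏ i ∈ Finset.range v, (q ^ w - q ^ (u + i))) / (∏ i ∈ Finset.range v, (q ^ v - q ^ i))

/-- `N₃(w,u,v,a) = N₁(u,a) · N₂(w-a, u-a, v-a)` -/
noncomputable def N3 (q : ℝ) (w u v a : ℕ) : ℝ :=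
  N1 q u a * N2 q (w - a) (u - a) (v - a)

/-! Take `C₂ = V_J` for `J` the first `k₂` coordinates and `C₁ = C₂ ⊕ D`, where the
`t`-dimensional code `D` is spanned by `e_{k₂}, …, e_{k₁-2}` and the indicator of the last
`n - k₁ + 1` coordinates, so that its support is exactly the complement `K` of `J`. Since the
supports of `C₂` and `D` are disjoint, `C₁ ∩ V_I` splits as `(C₂ ∩ V_I) ⊕ (D ∩ V_I)`, so the
rank condition defining `M_t(C₁, C₂)` says `D ≤ V_I`, i.e. `K ⊆ I`. Hence
`M_t(C₁, C₂) = |K| = n - k₂`. -/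

variable {F : Type} [Field F] {n : ℕ}

open Classical in
noncomputable def codeSupport (C : Submodule F (Fin n → F)) : Finset (Fin n) :=
  {i | ∃ x ∈ C, x i ≠ 0}

lemma mem_VI {I : Finset (Fin n)} {x : Fin n → F} :
    x ∈ VI F n I ↔ ∀ i ∉ I, x i = 0 := by
  simp [VI, Submodule.mem_pi]

lemma le_VI_iff {C : Submodule F (Fin n → F)} {I : Finset (Fin n)} :
    C ≤ VI F n I ↔ codeSupport C ⊆ I := by
  simp only [SetLike.le_def, mem_VI, codeSupport, Finset.mem_filter,
    Finset.mem_univ, true_and]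
  exact ⟨fun h i ⟨x, hx, hxi⟩ => by_contra fun hi => hxi (h hx i hi),
    fun h x hx i hi => by_contra fun hxi => hi (h ⟨x, hx, hxi⟩)⟩

lemma apply_eq_zero_of_notMem_codeSupport {C : Submodule F (Fin n → F)} {x : Fin n → F}
    (hx : x ∈ C) {i : Fin n} (hi : i ∉ codeSupport C) : x i = 0 :=
  mem_VI.mp (le_VI_iff.mpr subset_rfl hx) i hi

lemma finrank_VI (I : Finset (Fin n)) : Module.finrank F (VI F n I) = I.card := by
  have hVI : VI F n I = ⨅ i ∈ ((↑I)ᶜ : Set (Fin n)),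
      LinearMap.ker (LinearMap.proj i : (Fin n → F) →ₗ[F] F) := by
    ext x
    simp [mem_VI]
  rw [hVI, (LinearMap.iInfKerProjEquiv F (fun _ => F) disjoint_compl_right
    (by simp)).finrank_eq]
  simp

section DisjointSupports

variable {C D : Submodule F (Fin n → F)} (h : Disjoint (codeSupport C) (codeSupport D))
include h

lemma inf_eq_bot_of_disjoint_codeSupport : C ⊓ D = ⊥ := by
  refine eq_bot_iff.mpr fun x ⟨hxC, hxD⟩ => (Submodule.mem_bot F).mpr (funext fun i => ?_)
  by_cases hi : i ∈ codeSupport C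
  · exact apply_eq_zero_of_notMem_codeSupport hxD (Finset.disjoint_left.mp h hi)
  · exact apply_eq_zero_of_notMem_codeSupport hxC hi

lemma sup_inf_VI_of_disjoint_codeSupport (I : Finset (Fin n)) :
    (C ⊔ D) ⊓ VI F n I = C ⊓ VI F n I ⊔ D ⊓ VI F n I := by
  refine le_antisymm (fun x ⟨hx, hxI⟩ => ?_) (sup_le (inf_le_inf_right _ le_sup_left)
    (inf_le_inf_right _ le_sup_right))
  obtain ⟨c, hc, d, hd, rfl⟩ := Submodule.mem_sup.mp hx
  -- off `I` the sum `c + d` vanishes, and at each coordinate one of the summands does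
  have hcI : c ∈ VI F n I := mem_VI.mpr fun i hi => by
    have hsum := mem_VI.mp hxI i hi
    by_cases hiC : i ∈ codeSupport C
    · rwa [Pi.add_apply,
        apply_eq_zero_of_notMem_codeSupport hd (Finset.disjoint_left.mp h hiC), add_zero] at hsum
    · exact apply_eq_zero_of_notMem_codeSupport hc hiC
  have hdI : d ∈ VI F n I := by
    simpa using (VI F n I).sub_mem hxI hcI
  exact Submodule.add_mem_sup ⟨hc, hcI⟩ ⟨hd, hdI⟩

lemma finrank_sup_inf_VI_of_disjoint_codeSupport (I : Finset (Fin n)) :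
    Module.finrank F ↥((C ⊔ D) ⊓ VI F n I) =
      Module.finrank F ↥(C ⊓ VI F n I) + Module.finrank F ↥(D ⊓ VI F n I) := by
  have hbot : C ⊓ VI F n I ⊓ (D ⊓ VI F n I) = ⊥ :=
    eq_bot_iff.mpr <| (inf_le_inf inf_le_left inf_le_left).trans
      (inf_eq_bot_of_disjoint_codeSupport h).le
  rw [sup_inf_VI_of_disjoint_codeSupport h, ← Submodule.finrank_sup_add_finrank_inf_eq, hbot,
    finrank_bot, add_zero]

end DisjointSupports

lemma finrank_le_finrank_inf_VI_iff {D : Submodule F (Fin n → F)} {I : Finset (Fin n)} :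
    Module.finrank F D ≤ Module.finrank F ↥(D ⊓ VI F n I) ↔ codeSupport D ⊆ I := by
  rw [← le_VI_iff]
  exact ⟨fun hle => inf_eq_left.mp (Submodule.eq_of_le_of_finrank_le inf_le_left hle),
    fun hD => Submodule.finrank_mono (le_inf le_rfl hD)⟩

theorem RGHW_sup_of_disjoint_codeSupport {C D : Submodule F (Fin n → F)}
    (h : Disjoint (codeSupport C) (codeSupport D)) :
    RGHW F (Module.finrank F D) (C ⊔ D) C = (codeSupport D).card := by
  have hset : {d : ℕ | ∃ I : Finset (Fin n), I.card = d ∧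
      Module.finrank F ↥((C ⊔ D) ⊓ VI F n I) ≥
        Module.finrank F ↥(C ⊓ VI F n I) + Module.finrank F D} =
      {d | ∃ I : Finset (Fin n), I.card = d ∧ codeSupport D ⊆ I} := by
    simp only [finrank_sup_inf_VI_of_disjoint_codeSupport h, ge_iff_le, add_le_add_iff_left,
      finrank_le_finrank_inf_VI_iff]
  rw [RGHW, hset]
  refine le_antisymm (Nat.sInf_le ⟨_, rfl, subset_rfl⟩) (le_csInf ⟨_, _, rfl, subset_rfl⟩ ?_)
  rintro _ ⟨I, rfl, hI⟩
  exact Finset.card_le_card hI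

def blockMap {t : ℕ} (K : Finset (Fin n)) (g : Fin n → Fin t) :
    (Fin t → F) →ₗ[F] (Fin n → F) where
  toFun y i := if i ∈ K then y (g i) else 0
  map_add' y z := by
    ext i
    split_ifs <;> simp [*]
  map_smul' c y := by
    ext i
    split_ifs <;> simp [*]

lemma codeSupport_range_blockMap {t : ℕ} (K : Finset (Fin n)) (g : Fin n → Fin t) :
    codeSupport (LinearMap.range (blockMap (F := F) K g)) = K := by
  ext i
  simp only [codeSupport, Finset.mem_filter, Finset.mem_univ, true_and, LinearMap.mem_range]
  constructor
  · rintro ⟨_, ⟨y, rfl⟩, hy⟩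
    by_contra hi
    exact hy (if_neg hi)
  · intro hi
    exact ⟨_, ⟨fun _ => 1, rfl⟩, by simp [blockMap, hi]⟩

lemma finrank_range_blockMap {t : ℕ} {K : Finset (Fin n)} {g : Fin n → Fin t}
    (hg : ∀ j, ∃ i ∈ K, g i = j) :
    Module.finrank F (LinearMap.range (blockMap (F := F) K g)) = t := by
  have hinj : Function.Injective (blockMap (F := F) K g) := by
    refine (injective_iff_map_eq_zero _).mpr fun y hy => funext fun j => ?_
    obtain ⟨i, hi, rfl⟩ := hg j
    simpa [blockMap, hi] using congrFun hy i
  rw [LinearMap.finrank_range_of_inj hinj, Module.finrank_fin_fun]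

theorem exists_codes_singleton_attaining_general (F : Type) [Field F]
    (n k1 k2 t : ℕ) (hk21 : k2 < k1) (hk1n : k1 ≤ n) (ht : t = k1 - k2) :
    ∃ C₁ C₂ : Submodule F (Fin n → F), C₂ ≤ C₁ ∧
      Module.finrank F C₁ = k1 ∧ Module.finrank F C₂ = k2 ∧
      RGHW F t C₁ C₂ = n + t - k1 := by
  set J : Finset (Fin n) := {i | (i : ℕ) < k2}
  have hJ : J.card = k2 := Fin.card_filter_val_lt.trans (by omega)
  -- the blocks of `D` are `{k₂}, …, {k₁ - 2}` and `{k₁ - 1, …, n - 1}`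
  let g : Fin n → Fin t := fun i => ⟨min (i - k2) (t - 1), by omega⟩
  have hg : ∀ j, ∃ i ∈ Jᶜ, g i = j := fun j =>
    ⟨⟨k2 + j, by omega⟩, by simp [J], Fin.ext (show min (k2 + j - k2) (t - 1) = j by omega)⟩
  set D := LinearMap.range (blockMap (F := F) Jᶜ g)
  have hdisj : Disjoint (codeSupport (VI F n J)) (codeSupport D) := by
    rw [codeSupport_range_blockMap]
    exact disjoint_compl_right.mono_left (le_VI_iff.mp le_rfl)
  have hD : Module.finrank F D = t := finrank_range_blockMap hg
  refine ⟨VI F n J ⊔ D, VI F n J, le_sup_left, ?_, by rw [finrank_VI, hJ], ?_⟩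
  · have hsum := Submodule.finrank_sup_add_finrank_inf_eq (VI F n J) D
    rw [inf_eq_bot_of_disjoint_codeSupport hdisj, finrank_bot, finrank_VI, hJ, hD] at hsum
    omega
  · conv_lhs => rw [← hD]
    rw [RGHW_sup_of_disjoint_codeSupport hdisj, codeSupport_range_blockMap, Finset.card_compl, hJ,
      Fintype.card_fin]
    omega

/-- Lemma 3: for `t = k₁ - k₂` there are nested codes attaining the Singleton
bound for RGHW. -/
theorem exists_codes_singleton_attaining (F : Type) [Field F] [Fintype F]
    (n k1 k2 t : ℕ) (hk21 : k2 < k1) (hk1n : k1 ≤ n) (ht : t = k1 - k2) :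
    ∃ C₁ C₂ : Submodule F (Fin n → F), C₂ ≤ C₁ ∧
      Module.finrank F C₁ = k1 ∧ Module.finrank F C₂ = k2 ∧
      RGHW F t C₁ C₂ = n + t - k1 :=
  exists_codes_singleton_attaining_general F n k1 k2 t hk21 hk1n ht
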